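/- For the single-output-per-step Copy-k map producing y_s = U x_{s−k} for every s > k (and zero for s ≤ k), the averaged weights w_t = (1/(T−t)) Σ_{s=t+1}^T ‖∂y_s/∂x_t‖ equal ‖U‖/(T−t) for each t with t + k ≤ T, and zero otherwise; the resulting normalized range ρ̂_T = (Σ_t w_t (T−t))/(Σ_t w_t) equals (T−k)/(Σ_{t=1}^{T−k} 1/(T−t)), the harmonic-weighted value, which lies in [k, T−1]. -/

import Mathlib

open Finset

/-- Frobenius norm of a real matrix. -/
noncomputable def frob {c d : ℕ} (M : Matrix (Fin c) (Fin d) ℝ) : ℝ :=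
  Real.sqrt (∑ i, ∑ j, (M i j) ^ 2)

lemma frob_zero' {c d : ℕ} : frob (0 : Matrix (Fin c) (Fin d) ℝ) = 0 := by
  simp [frob]

lemma frob_pos' {c d : ℕ} {U : Matrix (Fin c) (Fin d) ℝ} (hU : U ≠ 0) : 0 < frob U := by
  apply Real.sqrt_pos.mpr
  by_contra h
  push_neg at h
  have hsum : ∑ i, ∑ j, (U i j) ^ 2 = 0 := le_antisymm h (by positivity)
  apply hU
  ext i j
  have h1 : ∀ i ∈ univ, (0:ℝ) ≤ ∑ j, (U i j) ^ 2 := by intros; positivity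
  have h3 := (Finset.sum_eq_zero_iff_of_nonneg h1).mp hsum i (mem_univ i)
  have h2 : ∀ j ∈ univ, (0:ℝ) ≤ (U i j) ^ 2 := by intros; positivity
  have h4 := (Finset.sum_eq_zero_iff_of_nonneg h2).mp h3 j (mem_univ j)
  have : U i j = 0 := by nlinarith [sq_nonneg (U i j)]
  simpa using this

/-- For the multi-step Copy-k map, the averaged weights are ‖U‖/(T−t) for
t + k ≤ T and zero otherwise, and the normalized range equals the
harmonic-weighted value (T−k)/(Σ_{t=1}^{T−k} 1/(T−t)), which lies in [k, T−1]. -/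
theorem stmt_19 (T k c d : ℕ) (hk : 1 ≤ k) (hkT : k < T)
    (U : Matrix (Fin c) (Fin d) ℝ) (hU : U ≠ 0)
    (J : ℕ → ℕ → Matrix (Fin c) (Fin d) ℝ)
    (hJ : ∀ s t, J s t = if s = t + k then U else 0)
    (w : ℕ → ℝ)
    (hw : ∀ t, w t = (1 / ((T : ℝ) - t)) * ∑ s ∈ Icc (t + 1) T, frob (J s t)) :
    (∀ t ∈ Icc 1 (T - 1),
        w t = if t + k ≤ T then frob U / ((T : ℝ) - t) else 0) ∧
    (∑ t ∈ Icc 1 (T - 1), w t * ((T : ℝ) - t)) / (∑ t ∈ Icc 1 (T - 1), w t) =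
      ((T : ℝ) - k) / (∑ t ∈ Icc 1 (T - k), 1 / ((T : ℝ) - t)) ∧
    (k : ℝ) ≤ (∑ t ∈ Icc 1 (T - 1), w t * ((T : ℝ) - t)) / (∑ t ∈ Icc 1 (T - 1), w t) ∧
    (∑ t ∈ Icc 1 (T - 1), w t * ((T : ℝ) - t)) / (∑ t ∈ Icc 1 (T - 1), w t) ≤ (T : ℝ) - 1 := by
  have hF : 0 < frob U := frob_pos' hU
  -- explicit formula for w
  have hwf : ∀ t ∈ Icc 1 (T - 1),
      w t = if t + k ≤ T then frob U / ((T : ℝ) - t) else 0 := by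
    intro t ht
    rw [mem_Icc] at ht
    have hsum : ∑ s ∈ Icc (t + 1) T, frob (J s t)
        = if t + k ≤ T then frob U else 0 := by
      have hterm : ∀ s ∈ Icc (t + 1) T,
          frob (J s t) = if s = t + k then frob U else 0 := by
        intro s _
        rw [hJ]
        split <;> simp [frob_zero']
      rw [Finset.sum_congr rfl hterm,
        Finset.sum_ite_eq' (Icc (t + 1) T) (t + k) (fun _ => frob U)]
      by_cases h : t + k ≤ T
      · simp [Finset.mem_Icc, h, (by omega : t + 1 ≤ t + k)]
      · simp [Finset.mem_Icc, h]
    rw [hw, hsum]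
    split <;> ring
  refine ⟨hwf, ?_⟩
  have hsub : Icc 1 (T - k) ⊆ Icc 1 (T - 1) := by
    intro x hx
    rw [mem_Icc] at hx ⊢
    omega
  -- facts for t in Icc 1 (T - k)
  have hmem : ∀ t ∈ Icc 1 (T - k), t + k ≤ T ∧ (k : ℝ) ≤ (T : ℝ) - t ∧
      (0 : ℝ) < (T : ℝ) - t ∧ (T : ℝ) - t ≤ (T : ℝ) - 1 := by
    intro t ht
    rw [mem_Icc] at ht
    have h1 : t + k ≤ T := by omega
    have h2 : (t : ℝ) + k ≤ T := by exact_mod_cast h1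
    have h3 : (1 : ℝ) ≤ t := by exact_mod_cast ht.1
    have hk1 : (1 : ℝ) ≤ k := by exact_mod_cast hk
    refine ⟨h1, by linarith, by linarith, by linarith⟩
  have hzero : ∀ t ∈ Icc 1 (T - 1), t ∉ Icc 1 (T - k) → w t = 0 := by
    intro t ht ht'
    rw [hwf t ht, if_neg]
    rw [mem_Icc] at ht ht'
    omega
  have hcard : (Icc 1 (T - k)).card = T - k := by
    rw [Nat.card_Icc]; omega
  have hcast : ((T - k : ℕ) : ℝ) = (T : ℝ) - k := by
    rw [Nat.cast_sub hkT.le]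
  -- numerator
  have hnum : ∑ t ∈ Icc 1 (T - 1), w t * ((T : ℝ) - t) = ((T : ℝ) - k) * frob U := by
    rw [← Finset.sum_subset hsub (fun x hx hx' => by rw [hzero x hx hx', zero_mul])]
    have : ∀ t ∈ Icc 1 (T - k), w t * ((T : ℝ) - t) = frob U := by
      intro t ht
      obtain ⟨h1, _, h3, _⟩ := hmem t ht
      rw [hwf t (hsub ht), if_pos h1, div_mul_cancel₀ _ h3.ne']
    rw [Finset.sum_congr rfl this, Finset.sum_const, hcard, nsmul_eq_mul, hcast]
  -- denominator
  have hden : ∑ t ∈ Icc 1 (T - 1), w t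
      = frob U * ∑ t ∈ Icc 1 (T - k), 1 / ((T : ℝ) - t) := by
    rw [← Finset.sum_subset hsub (fun x hx hx' => hzero x hx hx'), Finset.mul_sum]
    refine Finset.sum_congr rfl fun t ht => ?_
    obtain ⟨h1, _, _, _⟩ := hmem t ht
    rw [hwf t (hsub ht), if_pos h1]
    ring
  set H := ∑ t ∈ Icc 1 (T - k), 1 / ((T : ℝ) - t) with hH
  have hHpos : 0 < H := by
    apply Finset.sum_pos
    · intro t ht
      obtain ⟨_, _, h3, _⟩ := hmem t ht
      positivity
    · rw [← Finset.card_pos, hcard]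
      omega
  have hratio : (∑ t ∈ Icc 1 (T - 1), w t * ((T : ℝ) - t)) /
      (∑ t ∈ Icc 1 (T - 1), w t) = ((T : ℝ) - k) / H := by
    rw [hnum, hden, mul_comm ((T : ℝ) - k) (frob U), mul_div_mul_left _ _ hF.ne']
  have hk0 : (0 : ℝ) < k := by
    have : (1 : ℝ) ≤ k := by exact_mod_cast hk
    linarith
  have hT1 : (0 : ℝ) < (T : ℝ) - 1 := by
    have : (2 : ℝ) ≤ T := by exact_mod_cast (by omega : 2 ≤ T)
    linarith
  refine ⟨hratio, ?_, ?_⟩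
  · -- lower bound k
    rw [hratio, le_div_iff₀ hHpos]
    have hHle : H ≤ (T - k) • (1 / (k : ℝ)) := by
      apply Finset.sum_le_card_nsmul _ _ _ ?_ |>.trans_eq (by rw [hcard])
      intro t ht
      obtain ⟨_, h2, h3, _⟩ := hmem t ht
      exact one_div_le_one_div_of_le hk0 h2
    rw [nsmul_eq_mul, hcast] at hHle
    have h5 : (k : ℝ) * H ≤ (k : ℝ) * (((T : ℝ) - k) * (1 / k)) :=
      mul_le_mul_of_nonneg_left hHle hk0.le
    have h6 : (k : ℝ) * (((T : ℝ) - k) * (1 / k)) = (T : ℝ) - k := by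
      field_simp
    linarith
  · -- upper bound T - 1
    rw [hratio, div_le_iff₀ hHpos]
    have hHge : (T - k) • (1 / ((T : ℝ) - 1)) ≤ H := by
      apply (Finset.card_nsmul_le_sum _ _ _ ?_).trans_eq' (by rw [hcard])
      intro t ht
      obtain ⟨_, _, h3, h4⟩ := hmem t ht
      exact one_div_le_one_div_of_le h3 h4
    rw [nsmul_eq_mul, hcast] at hHge
    have h5 : ((T : ℝ) - 1) * (((T : ℝ) - k) * (1 / ((T : ℝ) - 1))) ≤ ((T : ℝ) - 1) * H :=
      mul_le_mul_of_nonneg_left hHge hT1.le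
    have h6 : ((T : ℝ) - 1) * (((T : ℝ) - k) * (1 / ((T : ℝ) - 1))) = (T : ℝ) - k := by
      field_simp
    linarith
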